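/- Consider the semi-discrete central-upwind scheme described in the context, for a horizontal vessel (α ≡ 0). If the cell averages satisfy Ā_{j,k} = A₀(s_j, θ_k), Q̄₁,{j,k} = 0 and Q̄₂,{j,k} = 0 for all cells (j,k), then: the minmod reconstruction yields interface values satisfying A = A₀, u = 0 and ω = 0 at every interface; every numerical flux H^F_{j±1/2,k} and H^G_{j,k±1/2} is the zero vector; every discretized source term S̄_{j,k} is the zero vector; hence the semi-discrete right-hand side vanishes identically and the second-order SSP Runge–Kutta update returns Ū(t+Δt) = Ū(t). That is, the scheme is well-balanced with respect to steady states at rest. -/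

import Mathlib

noncomputable section

namespace BloodFlow2D

/-- The generalized minmod limiter of three slopes. -/
def minmod3 (z₁ z₂ z₃ : ℝ) : ℝ :=
  if 0 < z₁ ∧ 0 < z₂ ∧ 0 < z₃ then min z₁ (min z₂ z₃)
  else if z₁ < 0 ∧ z₂ < 0 ∧ z₃ < 0 then max z₁ (max z₂ z₃)
  else 0

/-- A discrete field of conserved variables `U = (A, Q₁, Q₂) = (A, ψ_{s,o}Au, AL)`
on the grid of cells `(j,k)`. -/
abbrev Field := ℤ → ℤ → Fin 3 → ℝ

/-- Data of the second-order central-upwind scheme for the 2D blood-flow model on a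
horizontal vessel (`α ≡ 0`): grid sizes, physical and Coriolis parameters (which are
constants since `Γ = 0`, with `ψ_{s,o} = 1` and `A_θ = cθ·R² = 2·cθ·A`), the vessel
parameters `R₀`, `G₀` given at the cell interfaces (`R0s j k ≈ R₀(s_{j+1/2}, θ_k)`,
`R0θ j k ≈ R₀(s_j, θ_{k+1/2})`, similarly for `G₀`), and the one-sided local speeds,
regarded as functions of the two reconstructed interface states. -/
structure Scheme where
  Δs : ℝ
  Δθ : ℝ
  Δt : ℝ
  /-- minmod limiter parameter -/
  φlim : ℝ
  β : ℝ
  ρ : ℝ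
  g : ℝ
  ν : ℝ
  γs : ℝ
  γθ : ℝ
  ψs1 : ℝ
  ψs2 : ℝ
  ψθ1 : ℝ
  ψθ2 : ℝ
  cθ : ℝ
  R0s : ℤ → ℤ → ℝ
  R0θ : ℤ → ℤ → ℝ
  G0s : ℤ → ℤ → ℝ
  G0θ : ℤ → ℤ → ℝ
  ap : (Fin 3 → ℝ) → (Fin 3 → ℝ) → ℝ
  am : (Fin 3 → ℝ) → (Fin 3 → ℝ) → ℝ
  bp : (Fin 3 → ℝ) → (Fin 3 → ℝ) → ℝ
  bm : (Fin 3 → ℝ) → (Fin 3 → ℝ) → ℝ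

namespace Scheme

variable (S : Scheme)

/-- Radius at rest at the cell center, eq. (4.10). -/
def Rc (j k : ℤ) : ℝ := (S.R0s (j - 1) k + S.R0s j k + S.R0θ j (k - 1) + S.R0θ j k) / 4

/-- `A₀` at the cell center (horizontal vessel: `A₀ = R₀²/2`). -/
def A0c (j k : ℤ) : ℝ := (S.Rc j k) ^ 2 / 2

/-- `A₀` at the s-interface `(j+1/2, k)`. -/
def A0sI (j k : ℤ) : ℝ := (S.R0s j k) ^ 2 / 2

/-- `A₀` at the θ-interface `(j, k+1/2)`. -/
def A0θI (j k : ℤ) : ℝ := (S.R0θ j k) ^ 2 / 2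

/-- Elasticity coefficient at the cell center, eq. (4.19). -/
def G0c (j k : ℤ) : ℝ := (S.G0s (j - 1) k + S.G0s j k + S.G0θ j (k - 1) + S.G0θ j k) / 4

/-- The transmural pressure `p = G₀((A/A₀)^{β/2} − 1)`. -/
def pfun (G0 A0 A : ℝ) : ℝ := G0 * ((A / A0) ^ (S.β / 2) - 1)

/-- The conservative part `p̂` of the pressure splitting. -/
def phat (G0 A0 A : ℝ) : ℝ :=
  S.β / (S.β + 2) * S.pfun G0 A0 A - S.β / (S.β + 2) * G0 * (A0 - A) / A

/-- The remaining part `p̄ = p − p̂` of the pressure splitting. -/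
def pbar (G0 A0 A : ℝ) : ℝ := S.pfun G0 A0 A - S.phat G0 A0 A

/-- minmod slope in the axial direction. -/
def slopeS (w : ℤ → ℤ → ℝ) (j k : ℤ) : ℝ :=
  minmod3 (S.φlim * (w j k - w (j - 1) k) / S.Δs)
    ((w (j + 1) k - w (j - 1) k) / (2 * S.Δs))
    (S.φlim * (w (j + 1) k - w j k) / S.Δs)

/-- minmod slope in the angular direction. -/
def slopeT (w : ℤ → ℤ → ℝ) (j k : ℤ) : ℝ :=
  minmod3 (S.φlim * (w j k - w j (k - 1)) / S.Δθ)
    ((w j (k + 1) - w j (k - 1)) / (2 * S.Δθ))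
    (S.φlim * (w j (k + 1) - w j k) / S.Δθ)

/-- Reconstructed value at the east edge of cell `(j,k)` (interface `(j+1/2,k)`). -/
def valE (w : ℤ → ℤ → ℝ) (j k : ℤ) : ℝ := w j k + S.Δs / 2 * S.slopeS w j k

/-- Reconstructed value at the west edge of cell `(j,k)` (interface `(j-1/2,k)`). -/
def valW (w : ℤ → ℤ → ℝ) (j k : ℤ) : ℝ := w j k - S.Δs / 2 * S.slopeS w j k

/-- Reconstructed value at the north edge of cell `(j,k)` (interface `(j,k+1/2)`). -/
def valN (w : ℤ → ℤ → ℝ) (j k : ℤ) : ℝ := w j k + S.Δθ / 2 * S.slopeT w j k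

/-- Reconstructed value at the south edge of cell `(j,k)` (interface `(j,k-1/2)`). -/
def valS (w : ℤ → ℤ → ℝ) (j k : ℤ) : ℝ := w j k - S.Δθ / 2 * S.slopeT w j k

/-- The ratio `𝒜 = A/A₀` at cell centers, the quantity that is reconstructed. -/
def Acal (U : Field) (j k : ℤ) : ℝ := U j k 0 / S.A0c j k

/-- `A` at the s-interface `(j+1/2,k)`, from the left. -/
def AsM (U : Field) (j k : ℤ) : ℝ := S.valE (S.Acal U) j k * S.A0sI j k

/-- `A` at the s-interface `(j+1/2,k)`, from the right. -/
def AsP (U : Field) (j k : ℤ) : ℝ := S.valW (S.Acal U) (j + 1) k * S.A0sI j k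

/-- `A` at the θ-interface `(j,k+1/2)`, from below. -/
def AθM (U : Field) (j k : ℤ) : ℝ := S.valN (S.Acal U) j k * S.A0θI j k

/-- `A` at the θ-interface `(j,k+1/2)`, from above. -/
def AθP (U : Field) (j k : ℤ) : ℝ := S.valS (S.Acal U) j (k + 1) * S.A0θI j k

def Q1sM (U : Field) (j k : ℤ) : ℝ := S.valE (fun j k => U j k 1) j k
def Q1sP (U : Field) (j k : ℤ) : ℝ := S.valW (fun j k => U j k 1) (j + 1) k
def Q1θM (U : Field) (j k : ℤ) : ℝ := S.valN (fun j k => U j k 1) j k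
def Q1θP (U : Field) (j k : ℤ) : ℝ := S.valS (fun j k => U j k 1) j (k + 1)
def Q2sM (U : Field) (j k : ℤ) : ℝ := S.valE (fun j k => U j k 2) j k
def Q2sP (U : Field) (j k : ℤ) : ℝ := S.valW (fun j k => U j k 2) (j + 1) k
def Q2θM (U : Field) (j k : ℤ) : ℝ := S.valN (fun j k => U j k 2) j k
def Q2θP (U : Field) (j k : ℤ) : ℝ := S.valS (fun j k => U j k 2) j (k + 1)

/-- Axial velocity `u = Q₁/(ψ_{s,o}A)` (with `ψ_{s,o} = 1`) at the interfaces. -/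
def usM (U : Field) (j k : ℤ) : ℝ := S.Q1sM U j k / S.AsM U j k
def usP (U : Field) (j k : ℤ) : ℝ := S.Q1sP U j k / S.AsP U j k
def uθM (U : Field) (j k : ℤ) : ℝ := S.Q1θM U j k / S.AθM U j k
def uθP (U : Field) (j k : ℤ) : ℝ := S.Q1θP U j k / S.AθP U j k

/-- Angular velocity `ω = L/A_θ = (Q₂/A)/(2cθA)` at the interfaces. -/
def ωsM (U : Field) (j k : ℤ) : ℝ := S.Q2sM U j k / S.AsM U j k / (2 * S.cθ * S.AsM U j k)
def ωsP (U : Field) (j k : ℤ) : ℝ := S.Q2sP U j k / S.AsP U j k / (2 * S.cθ * S.AsP U j k)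
def ωθM (U : Field) (j k : ℤ) : ℝ := S.Q2θM U j k / S.AθM U j k / (2 * S.cθ * S.AθM U j k)
def ωθP (U : Field) (j k : ℤ) : ℝ := S.Q2θP U j k / S.AθP U j k / (2 * S.cθ * S.AθP U j k)

/-- Reconstructed interface states. -/
def UsM (U : Field) (j k : ℤ) : Fin 3 → ℝ := ![S.AsM U j k, S.Q1sM U j k, S.Q2sM U j k]
def UsP (U : Field) (j k : ℤ) : Fin 3 → ℝ := ![S.AsP U j k, S.Q1sP U j k, S.Q2sP U j k]
def UθM (U : Field) (j k : ℤ) : Fin 3 → ℝ := ![S.AθM U j k, S.Q1θM U j k, S.Q2θM U j k]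
def UθP (U : Field) (j k : ℤ) : Fin 3 → ℝ := ![S.AθP U j k, S.Q1θP U j k, S.Q2θP U j k]

/-- The axial flux `F(U) = (Au, ψ_{s,1}Au² + Ap̂/ρ, ψ_{θ,1}AuL)` evaluated on the
state `V = (A, Q₁, Q₂)` with the interface values of `G₀`, `A₀`. -/
def FluxF (G0 A0 : ℝ) (V : Fin 3 → ℝ) : Fin 3 → ℝ :=
  ![V 0 * (V 1 / V 0),
    S.ψs1 * V 0 * (V 1 / V 0) ^ 2 + V 0 * S.phat G0 A0 (V 0) / S.ρ,
    S.ψθ1 * V 0 * (V 1 / V 0) * (V 2 / V 0)]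

/-- The angular flux `G(U) = (Aω, ψ_{s,2}Auω, ψ_{θ,2}ALω + Ap̂/ρ)`. -/
def FluxG (G0 A0 : ℝ) (V : Fin 3 → ℝ) : Fin 3 → ℝ :=
  ![V 0 * (V 2 / V 0 / (2 * S.cθ * V 0)),
    S.ψs2 * V 0 * (V 1 / V 0) * (V 2 / V 0 / (2 * S.cθ * V 0)),
    S.ψθ2 * V 0 * (V 2 / V 0) * (V 2 / V 0 / (2 * S.cθ * V 0))
      + V 0 * S.phat G0 A0 (V 0) / S.ρ]

/-- Central-upwind numerical flux in the axial direction at the interface `(j+1/2,k)`. -/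
def HF (U : Field) (j k : ℤ) : Fin 3 → ℝ := fun i =>
  (S.ap (S.UsM U j k) (S.UsP U j k) * S.FluxF (S.G0s j k) (S.A0sI j k) (S.UsM U j k) i
      - S.am (S.UsM U j k) (S.UsP U j k) * S.FluxF (S.G0s j k) (S.A0sI j k) (S.UsP U j k) i)
    / (S.ap (S.UsM U j k) (S.UsP U j k) - S.am (S.UsM U j k) (S.UsP U j k))
  + S.ap (S.UsM U j k) (S.UsP U j k) * S.am (S.UsM U j k) (S.UsP U j k)
    / (S.ap (S.UsM U j k) (S.UsP U j k) - S.am (S.UsM U j k) (S.UsP U j k))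
    * (S.UsP U j k i - S.UsM U j k i)

/-- Central-upwind numerical flux in the angular direction at the interface `(j,k+1/2)`. -/
def HG (U : Field) (j k : ℤ) : Fin 3 → ℝ := fun i =>
  (S.bp (S.UθM U j k) (S.UθP U j k) * S.FluxG (S.G0θ j k) (S.A0θI j k) (S.UθM U j k) i
      - S.bm (S.UθM U j k) (S.UθP U j k) * S.FluxG (S.G0θ j k) (S.A0θI j k) (S.UθP U j k) i)
    / (S.bp (S.UθM U j k) (S.UθP U j k) - S.bm (S.UθM U j k) (S.UθP U j k))
  + S.bp (S.UθM U j k) (S.UθP U j k) * S.bm (S.UθM U j k) (S.UθP U j k)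
    / (S.bp (S.UθM U j k) (S.UθP U j k) - S.bm (S.UθM U j k) (S.UθP U j k))
    * (S.UθP U j k i - S.UθM U j k i)

/-- The discretized source term: pressure source terms
`∂₂p̄ = (p̄/G₀)∂₂G₀ − (p̂/A₀)∂₂A₀` and `∂₃p̄ = (p̄/G₀)∂₃G₀ − (p̂/A₀)∂₃A₀`
via centered differences, viscous friction proportional to `u` and `L`,
and gravity `−gA sin(α)` with `α ≡ 0`. -/
def Src (U : Field) (j k : ℤ) : Fin 3 → ℝ :=
  ![0,
    -(U j k 0 / S.ρ)
        * (S.pbar (S.G0c j k) (S.A0c j k) (U j k 0) / S.G0c j k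
              * ((S.G0s j k - S.G0s (j - 1) k) / S.Δs)
            - S.phat (S.G0c j k) (S.A0c j k) (U j k 0) / S.A0c j k
              * ((S.A0sI j k - S.A0sI (j - 1) k) / S.Δs))
      - S.g * U j k 0 * Real.sin 0
      - S.ν / S.ρ * (S.γs + 2) * (2 * U j k 0 / (S.Rc j k) ^ 2) * (U j k 1 / U j k 0),
    -(U j k 0 / S.ρ)
        * (S.pbar (S.G0c j k) (S.A0c j k) (U j k 0) / S.G0c j k
              * ((S.G0θ j k - S.G0θ j (k - 1)) / S.Δθ)
            - S.phat (S.G0c j k) (S.A0c j k) (U j k 0) / S.A0c j k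
              * ((S.A0θI j k - S.A0θI j (k - 1)) / S.Δθ))
      - S.ν / S.ρ * ((S.γθ + 1) * (S.γθ + 3) * (S.γθ + 4) / (4 * (S.γθ + 2)))
          * (2 * U j k 0 / (S.Rc j k) ^ 2) * (U j k 2 / U j k 0)]

/-- One forward-Euler step of the semi-discrete scheme. -/
def Euler (U : Field) : Field := fun j k i =>
  U j k i - S.Δt / S.Δs * (S.HF U j k i - S.HF U (j - 1) k i)
    - S.Δt / S.Δθ * (S.HG U j k i - S.HG U j (k - 1) i)
    + S.Δt * S.Src U j k i

/-- The second-order strong-stability-preserving Runge–Kutta step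
`U⁽¹⁾ = U + ΔtC[U]`, `U⁽²⁾ = ½U + ½(U⁽¹⁾ + ΔtC[U⁽¹⁾])`. -/
def RK2 (U : Field) : Field := fun j k i => (U j k i + S.Euler (S.Euler U) j k i) / 2

end Scheme

/-!
At a state at rest the reconstructed variables `𝒜 = A/A₀ ≡ 1`, `Q₁ ≡ 0` and `Q₂ ≡ 0` are
constant fields, so every minmod slope vanishes and each interface receives the same state
`(A₀, 0, 0)` from both sides. There `A/A₀ = 1`, so both parts `p̂`, `p̄` of the pressure
vanish; hence the physical fluxes are zero, the central-upwind flux (a combination of the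
two physical fluxes and of the jump of the states) is zero, and so are the sources. Each
forward-Euler stage is then the identity, and so is their convex combination.
-/

lemma minmod3_zero : minmod3 0 0 0 = 0 := by simp [minmod3]

namespace Scheme

variable (S : Scheme)

section Reconstruction

variable {w : ℤ → ℤ → ℝ} {c : ℝ}

lemma slopeS_const (hw : ∀ j k, w j k = c) (j k : ℤ) : S.slopeS w j k = 0 := by
  simp [slopeS, hw, minmod3_zero]

lemma slopeT_const (hw : ∀ j k, w j k = c) (j k : ℤ) : S.slopeT w j k = 0 := by
  simp [slopeT, hw, minmod3_zero]

lemma valE_const (hw : ∀ j k, w j k = c) (j k : ℤ) : S.valE w j k = c := by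
  simp [valE, S.slopeS_const hw, hw]

lemma valW_const (hw : ∀ j k, w j k = c) (j k : ℤ) : S.valW w j k = c := by
  simp [valW, S.slopeS_const hw, hw]

lemma valN_const (hw : ∀ j k, w j k = c) (j k : ℤ) : S.valN w j k = c := by
  simp [valN, S.slopeT_const hw, hw]

lemma valS_const (hw : ∀ j k, w j k = c) (j k : ℤ) : S.valS w j k = c := by
  simp [valS, S.slopeT_const hw, hw]

end Reconstruction

section Pressure

variable {G0 A0 : ℝ}

lemma pfun_self (hA0 : A0 ≠ 0) : S.pfun G0 A0 A0 = 0 := by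
  simp [pfun, div_self hA0]

lemma phat_self (hA0 : A0 ≠ 0) : S.phat G0 A0 A0 = 0 := by
  simp [phat, S.pfun_self hA0]

lemma pbar_self (hA0 : A0 ≠ 0) : S.pbar G0 A0 A0 = 0 := by
  simp [pbar, S.pfun_self hA0, S.phat_self hA0]

lemma fluxF_rest (hA0 : A0 ≠ 0) : S.FluxF G0 A0 ![A0, 0, 0] = 0 := by
  funext i
  fin_cases i <;> simp [FluxF, S.phat_self hA0]

lemma fluxG_rest (hA0 : A0 ≠ 0) : S.FluxG G0 A0 ![A0, 0, 0] = 0 := by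
  funext i
  fin_cases i <;> simp [FluxG, S.phat_self hA0]

end Pressure

lemma Rc_pos (hR0s : ∀ j k, 0 < S.R0s j k) (hR0θ : ∀ j k, 0 < S.R0θ j k) (j k : ℤ) :
    0 < S.Rc j k := by
  have := hR0s (j - 1) k; have := hR0s j k; have := hR0θ j (k - 1); have := hR0θ j k
  unfold Rc
  linarith

lemma A0c_ne_zero (hR0s : ∀ j k, 0 < S.R0s j k) (hR0θ : ∀ j k, 0 < S.R0θ j k) (j k : ℤ) :
    S.A0c j k ≠ 0 := by
  have := S.Rc_pos hR0s hR0θ j k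
  unfold A0c
  positivity

lemma A0sI_ne_zero {j k : ℤ} (h : S.R0s j k ≠ 0) : S.A0sI j k ≠ 0 := by
  unfold A0sI
  positivity

lemma A0θI_ne_zero {j k : ℤ} (h : S.R0θ j k ≠ 0) : S.A0θI j k ≠ 0 := by
  unfold A0θI
  positivity

def restState : Field := fun j k => ![S.A0c j k, 0, 0]

lemma eq_restState {U : Field} (hA : ∀ j k, U j k 0 = S.A0c j k) (hQ1 : ∀ j k, U j k 1 = 0)
    (hQ2 : ∀ j k, U j k 2 = 0) : U = S.restState := by
  funext j k i
  fin_cases i <;> simp [restState, hA, hQ1, hQ2]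

section RestState

variable {S}

lemma Acal_restState (hA0c : ∀ j k, S.A0c j k ≠ 0) (j k : ℤ) : S.Acal S.restState j k = 1 := by
  simp [Acal, restState, hA0c j k]

lemma Q1_restState (j k : ℤ) : S.restState j k 1 = 0 := rfl

lemma Q2_restState (j k : ℤ) : S.restState j k 2 = 0 := rfl

lemma AsM_restState (hA0c : ∀ j k, S.A0c j k ≠ 0) (j k : ℤ) :
    S.AsM S.restState j k = S.A0sI j k := by
  simp [AsM, S.valE_const (Acal_restState hA0c)]

lemma AsP_restState (hA0c : ∀ j k, S.A0c j k ≠ 0) (j k : ℤ) :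
    S.AsP S.restState j k = S.A0sI j k := by
  simp [AsP, S.valW_const (Acal_restState hA0c)]

lemma AθM_restState (hA0c : ∀ j k, S.A0c j k ≠ 0) (j k : ℤ) :
    S.AθM S.restState j k = S.A0θI j k := by
  simp [AθM, S.valN_const (Acal_restState hA0c)]

lemma AθP_restState (hA0c : ∀ j k, S.A0c j k ≠ 0) (j k : ℤ) :
    S.AθP S.restState j k = S.A0θI j k := by
  simp [AθP, S.valS_const (Acal_restState hA0c)]

lemma UsM_restState (hA0c : ∀ j k, S.A0c j k ≠ 0) (j k : ℤ) :
    S.UsM S.restState j k = ![S.A0sI j k, 0, 0] := by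
  simp [UsM, AsM_restState hA0c, Q1sM, Q2sM, S.valE_const Q1_restState,
    S.valE_const Q2_restState]

lemma UsP_restState (hA0c : ∀ j k, S.A0c j k ≠ 0) (j k : ℤ) :
    S.UsP S.restState j k = ![S.A0sI j k, 0, 0] := by
  simp [UsP, AsP_restState hA0c, Q1sP, Q2sP, S.valW_const Q1_restState,
    S.valW_const Q2_restState]

lemma UθM_restState (hA0c : ∀ j k, S.A0c j k ≠ 0) (j k : ℤ) :
    S.UθM S.restState j k = ![S.A0θI j k, 0, 0] := by
  simp [UθM, AθM_restState hA0c, Q1θM, Q2θM, S.valN_const Q1_restState,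
    S.valN_const Q2_restState]

lemma UθP_restState (hA0c : ∀ j k, S.A0c j k ≠ 0) (j k : ℤ) :
    S.UθP S.restState j k = ![S.A0θI j k, 0, 0] := by
  simp [UθP, AθP_restState hA0c, Q1θP, Q2θP, S.valS_const Q1_restState,
    S.valS_const Q2_restState]

lemma velocities_restState (j k : ℤ) :
    S.usM S.restState j k = 0 ∧ S.usP S.restState j k = 0 ∧ S.uθM S.restState j k = 0 ∧
      S.uθP S.restState j k = 0 ∧ S.ωsM S.restState j k = 0 ∧ S.ωsP S.restState j k = 0 ∧
      S.ωθM S.restState j k = 0 ∧ S.ωθP S.restState j k = 0 := by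
  simp [usM, usP, uθM, uθP, ωsM, ωsP, ωθM, ωθP, Q1sM, Q1sP, Q1θM, Q1θP, Q2sM, Q2sP, Q2θM,
    Q2θP, S.valE_const Q1_restState, S.valW_const Q1_restState, S.valN_const Q1_restState,
    S.valS_const Q1_restState, S.valE_const Q2_restState, S.valW_const Q2_restState,
    S.valN_const Q2_restState, S.valS_const Q2_restState]

lemma HF_restState (hA0c : ∀ j k, S.A0c j k ≠ 0) {j k : ℤ} (hA0 : S.A0sI j k ≠ 0) :
    S.HF S.restState j k = 0 := by
  funext i
  simp [HF, UsM_restState hA0c, UsP_restState hA0c, S.fluxF_rest hA0]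

lemma HG_restState (hA0c : ∀ j k, S.A0c j k ≠ 0) {j k : ℤ} (hA0 : S.A0θI j k ≠ 0) :
    S.HG S.restState j k = 0 := by
  funext i
  simp [HG, UθM_restState hA0c, UθP_restState hA0c, S.fluxG_rest hA0]

lemma Src_restState {j k : ℤ} (hA0 : S.A0c j k ≠ 0) : S.Src S.restState j k = 0 := by
  funext i
  fin_cases i <;> simp [Src, restState, S.pbar_self hA0, S.phat_self hA0]

end RestState

lemma euler_eq_self {U : Field} (hHF : ∀ j k, S.HF U j k = 0) (hHG : ∀ j k, S.HG U j k = 0)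
    (hSrc : ∀ j k, S.Src U j k = 0) : S.Euler U = U := by
  funext j k i
  simp [Euler, hHF, hHG, hSrc]

lemma rk2_eq_self {U : Field} (h : S.Euler U = U) : S.RK2 U = U := by
  funext j k i
  simp only [RK2, h]
  ring

end Scheme

theorem stmt12_general (S : Scheme)
    (hR0s : ∀ j k, 0 < S.R0s j k) (hR0θ : ∀ j k, 0 < S.R0θ j k)
    (U : Field)
    (hA : ∀ j k, U j k 0 = S.A0c j k)
    (hQ1 : ∀ j k, U j k 1 = 0)
    (hQ2 : ∀ j k, U j k 2 = 0) :
    (∀ j k, S.AsM U j k = S.A0sI j k ∧ S.AsP U j k = S.A0sI j k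
      ∧ S.AθM U j k = S.A0θI j k ∧ S.AθP U j k = S.A0θI j k) ∧
    (∀ j k, S.usM U j k = 0 ∧ S.usP U j k = 0 ∧ S.uθM U j k = 0 ∧ S.uθP U j k = 0
      ∧ S.ωsM U j k = 0 ∧ S.ωsP U j k = 0 ∧ S.ωθM U j k = 0 ∧ S.ωθP U j k = 0) ∧
    (∀ j k, S.HF U j k = 0) ∧
    (∀ j k, S.HG U j k = 0) ∧
    (∀ j k, S.Src U j k = 0) ∧
    S.RK2 U = U := by
  obtain rfl := S.eq_restState hA hQ1 hQ2
  have hA0c := S.A0c_ne_zero hR0s hR0θ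
  have hHF j k := Scheme.HF_restState hA0c (S.A0sI_ne_zero (hR0s j k).ne')
  have hHG j k := Scheme.HG_restState hA0c (S.A0θI_ne_zero (hR0θ j k).ne')
  have hSrc j k := Scheme.Src_restState (hA0c j k)
  refine ⟨fun j k => ⟨Scheme.AsM_restState hA0c j k, Scheme.AsP_restState hA0c j k,
      Scheme.AθM_restState hA0c j k, Scheme.AθP_restState hA0c j k⟩,
    Scheme.velocities_restState, hHF, hHG, hSrc, S.rk2_eq_self (S.euler_eq_self hHF hHG hSrc)⟩

/-- **Well-balanced property of the central-upwind scheme** (Proposition 4.1, for a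
horizontal vessel): if the cell averages are those of a steady state at rest, i.e.
`Ā = A₀`, `Q̄₁ = 0`, `Q̄₂ = 0`, then the reconstruction gives `A = A₀`, `u = 0`, `ω = 0`
at every interface, all the numerical fluxes and all the discretized source terms
vanish, and the SSP Runge–Kutta update leaves the cell averages unchanged. -/
theorem stmt12 (S : Scheme)
    (hΔs : 0 < S.Δs) (hΔθ : 0 < S.Δθ) (hΔt : 0 < S.Δt)
    (hρ : 0 < S.ρ) (hβ : 0 < S.β) (hcθ : 0 < S.cθ)
    (hR0s : ∀ j k, 0 < S.R0s j k) (hR0θ : ∀ j k, 0 < S.R0θ j k)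
    (hG0s : ∀ j k, 0 < S.G0s j k) (hG0θ : ∀ j k, 0 < S.G0θ j k)
    (hap : ∀ V W, 0 ≤ S.ap V W) (ham : ∀ V W, S.am V W ≤ 0)
    (hbp : ∀ V W, 0 ≤ S.bp V W) (hbm : ∀ V W, S.bm V W ≤ 0)
    (hgapa : ∀ V W, S.ap V W - S.am V W ≠ 0)
    (hgapb : ∀ V W, S.bp V W - S.bm V W ≠ 0)
    (U : Field)
    (hA : ∀ j k, U j k 0 = S.A0c j k)
    (hQ1 : ∀ j k, U j k 1 = 0)
    (hQ2 : ∀ j k, U j k 2 = 0) :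
    (∀ j k, S.AsM U j k = S.A0sI j k ∧ S.AsP U j k = S.A0sI j k
      ∧ S.AθM U j k = S.A0θI j k ∧ S.AθP U j k = S.A0θI j k) ∧
    (∀ j k, S.usM U j k = 0 ∧ S.usP U j k = 0 ∧ S.uθM U j k = 0 ∧ S.uθP U j k = 0
      ∧ S.ωsM U j k = 0 ∧ S.ωsP U j k = 0 ∧ S.ωθM U j k = 0 ∧ S.ωθP U j k = 0) ∧
    (∀ j k, S.HF U j k = 0) ∧
    (∀ j k, S.HG U j k = 0) ∧
    (∀ j k, S.Src U j k = 0) ∧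
    S.RK2 U = U :=
  stmt12_general S hR0s hR0θ U hA hQ1 hQ2

end BloodFlow2D
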